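/- Suppose Ω is compact and the market (f, S) is arbitrage-free, and let H : Ω → ℝ be a continuous nonnegative claim. Then there exists a superhedge π* ∈ ℝ^{D+1} for H that minimizes the cost π·f over all superhedges π for H; moreover, π*·f = ∫ H dP* for some martingale measure P*. -/

import Mathlib

/-!
Superhedging is a linear program whose constraints are indexed by `Ω`. Modulo portfolios with
zero payoff and zero price, no-arbitrage makes every sublevel set of the price on the superhedges
bounded, so a cheapest superhedge `π*` exists. Duality comes from the set `K` of joint expectations
`(E_P S, E_P H)` over all probability measures `P`, which is convex and, by Prokhorov, compact.
If `(f, π*·f)` were outside `K`, a hyperplane `v·x + λ h = u` would separate it from `K`; testing it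
on Dirac measures gives a strictly cheaper superhedge when `λ < 0`, and the portfolio `v + λ π*`
is an arbitrage when `λ ≥ 0`.
-/

open MeasureTheory Filter Topology

variable {Ω : Type*}

section Defs

variable [TopologicalSpace Ω] [MeasurableSpace Ω]

/-- A portfolio `π` is an arbitrage for the market `(f, S)`:
nonpositive cost, nonnegative payoff everywhere, strictly positive payoff somewhere. -/
def IsArbitrage {D : ℕ} (f : Fin (D + 1) → ℝ) (S : Fin (D + 1) → C(Ω, ℝ))
    (π : Fin (D + 1) → ℝ) : Prop :=
  (∑ d, π d * f d) ≤ 0 ∧ (∀ ω : Ω, 0 ≤ ∑ d, π d * S d ω) ∧ (∃ ω : Ω, 0 < ∑ d, π d * S d ω)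

/-- The market `(f, S)` is arbitrage-free. -/
def ArbitrageFree {D : ℕ} (f : Fin (D + 1) → ℝ) (S : Fin (D + 1) → C(Ω, ℝ)) : Prop :=
  ¬ ∃ π : Fin (D + 1) → ℝ, IsArbitrage f S π

/-- A measure has full support: every nonempty open set has positive measure. -/
def HasFullSupport (P : Measure Ω) : Prop :=
  ∀ U : Set Ω, IsOpen U → U.Nonempty → 0 < P U

/-- A martingale measure for the market `(f, S)`: a Borel probability measure under which
every asset payoff is integrable with expectation equal to its time-0 price. -/
def IsMartingaleMeasure {D : ℕ} (f : Fin (D + 1) → ℝ) (S : Fin (D + 1) → C(Ω, ℝ))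
    (P : Measure Ω) : Prop :=
  IsProbabilityMeasure P ∧ ∀ d, Integrable (S d) P ∧ (∫ ω, S d ω ∂P) = f d

/-- A portfolio `π` is a superhedge for the claim `H`. -/
def IsSuperhedge {D : ℕ} (S : Fin (D + 1) → C(Ω, ℝ)) (H : C(Ω, ℝ))
    (π : Fin (D + 1) → ℝ) : Prop :=
  ∀ ω : Ω, H ω ≤ ∑ d, π d * S d ω

/-- A portfolio `π` is a subhedge for the claim `H`. -/
def IsSubhedge {D : ℕ} (S : Fin (D + 1) → C(Ω, ℝ)) (H : C(Ω, ℝ))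
    (π : Fin (D + 1) → ℝ) : Prop :=
  ∀ ω : Ω, (∑ d, π d * S d ω) ≤ H ω

end Defs

open Set

section Superhedges

variable {ι : Type*} [Fintype ι]

theorem exists_tendsto_normalize_of_not_isBounded {E : Type*} [NormedAddCommGroup E]
    [NormedSpace ℝ E] [ProperSpace E] {s : Set E} (hs : ¬ Bornology.IsBounded s) :
    ∃ x : ℕ → E, (∀ k, x k ∈ s) ∧ Tendsto (fun k => ‖x k‖) atTop atTop ∧
      ∃ v, ‖v‖ = 1 ∧ Tendsto (fun k => ‖x k‖⁻¹ • x k) atTop (𝓝 v) := by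
  simp only [isBounded_iff_forall_norm_le, not_exists, not_forall, not_le] at hs
  choose y hys hy using fun k : ℕ => hs k
  have hpos : ∀ k, 0 < ‖y k‖ := fun k => (Nat.cast_nonneg k).trans_lt (hy k)
  have hsphere : ∀ k, ‖y k‖⁻¹ • y k ∈ Metric.sphere (0 : E) 1 := fun k => by
    rw [mem_sphere_zero_iff_norm, norm_smul, norm_inv, norm_norm, inv_mul_cancel₀ (hpos k).ne']
  obtain ⟨v, hv, φ, hφ, hlim⟩ := (isCompact_sphere (0 : E) 1).tendsto_subseq hsphere
  refine ⟨y ∘ φ, fun k => hys _, ?_, v, mem_sphere_zero_iff_norm.mp hv, hlim⟩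
  exact tendsto_atTop_mono (fun k => (Nat.cast_le.2 (hφ.id_le k)).trans (hy _).le)
    tendsto_natCast_atTop_atTop

theorem dotProduct_nonpos_of_tendsto_normalize {x : ℕ → ι → ℝ} {v w : ι → ℝ} {b : ℝ}
    (hx : Tendsto (fun k => ‖x k‖) atTop atTop)
    (hv : Tendsto (fun k => ‖x k‖⁻¹ • x k) atTop (𝓝 v)) (hb : ∀ k, x k ⬝ᵥ w ≤ b) :
    v ⬝ᵥ w ≤ 0 := by
  have hlhs : Tendsto (fun k => (‖x k‖⁻¹ • x k) ⬝ᵥ w) atTop (𝓝 (v ⬝ᵥ w)) :=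
    ((continuous_id.dotProduct continuous_const).tendsto v).comp hv
  have hrhs : Tendsto (fun k => ‖x k‖⁻¹ * b) atTop (𝓝 0) := by
    simpa using hx.inv_tendsto_atTop.mul_const b
  refine le_of_tendsto_of_tendsto hlhs hrhs (Eventually.of_forall fun k => ?_)
  change (‖x k‖⁻¹ • x k) ⬝ᵥ w ≤ ‖x k‖⁻¹ * b
  rw [smul_dotProduct, smul_eq_mul]
  exact mul_le_mul_of_nonneg_left (hb k) (inv_nonneg.2 (norm_nonneg _))

variable (f : ι → ℝ) (s : Ω → ι → ℝ) (h : Ω → ℝ)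

/-- `IsSuperhedge S H` is `superhedges (fun ω d => S d ω) H` up to unfolding: the sums
`∑ d, π d * x d` of the market definitions are the dot products `π ⬝ᵥ x`. -/
def superhedges : Set (ι → ℝ) :=
  {π | ∀ ω, h ω ≤ π ⬝ᵥ s ω}

def nullPortfolios : Submodule ℝ (ι → ℝ) where
  carrier := {v | (∀ ω, v ⬝ᵥ s ω = 0) ∧ v ⬝ᵥ f = 0}
  add_mem' := by
    rintro v w ⟨hv, hvf⟩ ⟨hw, hwf⟩
    exact ⟨fun ω => by rw [add_dotProduct, hv, hw, add_zero], by rw [add_dotProduct, hvf, hwf,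
      add_zero]⟩
  zero_mem' := ⟨fun _ => zero_dotProduct _, zero_dotProduct _⟩
  smul_mem' := by
    rintro c v ⟨hv, hvf⟩
    exact ⟨fun ω => by rw [smul_dotProduct, hv, smul_zero], by rw [smul_dotProduct, hvf,
      smul_zero]⟩

theorem isClosed_superhedges : IsClosed (superhedges s h) := by
  simp only [superhedges, ofPred_forall]
  exact isClosed_iInter fun ω => isClosed_le continuous_const
    (continuous_id.dotProduct continuous_const)

variable {f s h}

theorem exists_mem_superhedges_of_isCompl {W : Submodule ℝ (ι → ℝ)}
    (hW : IsCompl (nullPortfolios f s) W) {π : ι → ℝ} (hπ : π ∈ superhedges s h) :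
    ∃ π' ∈ W, π' ∈ superhedges s h ∧ π' ⬝ᵥ f = π ⬝ᵥ f := by
  have hπ_sup : π ∈ nullPortfolios f s ⊔ W := by rw [hW.sup_eq_top]; exact Submodule.mem_top
  obtain ⟨n, ⟨hns, hnf⟩, w, hw, rfl⟩ := Submodule.mem_sup.1 hπ_sup
  refine ⟨w, hw, fun ω => ?_, by rw [add_dotProduct, hnf, zero_add]⟩
  simpa [add_dotProduct, hns ω] using hπ ω

theorem isBounded_superhedges_inter
    (hnull : ∀ v, (∀ ω, 0 ≤ v ⬝ᵥ s ω) → v ⬝ᵥ f ≤ 0 → v ∈ nullPortfolios f s)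
    {W : Submodule ℝ (ι → ℝ)} (hW : Disjoint (nullPortfolios f s) W) (c : ℝ) :
    Bornology.IsBounded ((W : Set (ι → ℝ)) ∩ superhedges s h ∩ {π | π ⬝ᵥ f ≤ c}) := by
  by_contra hB
  obtain ⟨x, hx, hnorm, v, hv1, hv⟩ := exists_tendsto_normalize_of_not_isBounded hB
  have hvW : v ∈ W :=
    W.closed_of_finiteDimensional.mem_of_tendsto hv
      (Eventually.of_forall fun k => W.smul_mem _ (hx k).1.1)
  have hpayoff : ∀ ω, 0 ≤ v ⬝ᵥ s ω := fun ω => by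
    have := dotProduct_nonpos_of_tendsto_normalize (w := -s ω) hnorm hv
      fun k => by rw [dotProduct_neg]; exact neg_le_neg ((hx k).1.2 ω)
    rwa [dotProduct_neg, neg_nonpos] at this
  have hcost : v ⬝ᵥ f ≤ 0 := dotProduct_nonpos_of_tendsto_normalize hnorm hv fun k => (hx k).2
  have hv0 : v = 0 := Submodule.disjoint_def.1 hW v (hnull v hpayoff hcost) hvW
  simp [hv0] at hv1

theorem exists_isMinOn_superhedges
    (hnull : ∀ v, (∀ ω, 0 ≤ v ⬝ᵥ s ω) → v ⬝ᵥ f ≤ 0 → v ∈ nullPortfolios f s)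
    (hne : (superhedges s h).Nonempty) :
    ∃ π ∈ superhedges s h, IsMinOn (· ⬝ᵥ f) (superhedges s h) π := by
  obtain ⟨W, hW⟩ := (nullPortfolios f s).exists_isCompl
  obtain ⟨π₀, hπ₀⟩ := hne
  set B := (W : Set (ι → ℝ)) ∩ superhedges s h ∩ {π | π ⬝ᵥ f ≤ π₀ ⬝ᵥ f}
  have hcost : Continuous fun π : ι → ℝ => π ⬝ᵥ f := continuous_id.dotProduct continuous_const
  have hBc : IsCompact B :=
    Metric.isCompact_of_isClosed_isBounded
      ((W.closed_of_finiteDimensional.inter (isClosed_superhedges s h)).inter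
        (isClosed_le hcost continuous_const))
      (isBounded_superhedges_inter hnull hW.disjoint _)
  obtain ⟨π₁, hπ₁W, hπ₁, hπ₁f⟩ := exists_mem_superhedges_of_isCompl hW hπ₀
  obtain ⟨πstar, hπstar, hmin⟩ := hBc.exists_isMinOn ⟨π₁, ⟨hπ₁W, hπ₁⟩, hπ₁f.le⟩ hcost.continuousOn
  refine ⟨πstar, hπstar.1.2, isMinOn_iff.2 fun π hπ => ?_⟩
  obtain ⟨π', hπ'W, hπ', hπ'f⟩ := exists_mem_superhedges_of_isCompl hW hπ
  rcases le_or_gt (π ⬝ᵥ f) (π₀ ⬝ᵥ f) with hle | hlt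
  · exact (isMinOn_iff.1 hmin π' ⟨⟨hπ'W, hπ'⟩, hπ'f.trans_le hle⟩).trans_eq hπ'f
  · exact (hπstar.2 : πstar ⬝ᵥ f ≤ π₀ ⬝ᵥ f).trans hlt.le

end Superhedges

theorem ContinuousLinearMap.apply_prod_eq_dotProduct_add {ι : Type*} [Fintype ι] [DecidableEq ι]
    (φ : ((ι → ℝ) × ℝ) →L[ℝ] ℝ) (x : ι → ℝ) (t : ℝ) :
    φ (x, t) = (fun i => φ (Pi.single i 1, 0)) ⬝ᵥ x + φ (0, 1) * t := by
  have hx : (x, t) =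
      ∑ i, x i • ((Pi.single i 1 : ι → ℝ), (0 : ℝ)) + t • ((0 : ι → ℝ), (1 : ℝ)) := by
    ext <;> simp [Prod.fst_sum, Prod.snd_sum, Pi.single_apply]
  rw [hx, map_add, map_sum]
  simp only [map_smul, smul_eq_mul, dotProduct, mul_comm]

theorem exists_dotProduct_add_mul_lt_of_notMem {ι : Type*} [Fintype ι]
    {K : Set ((ι → ℝ) × ℝ)} (hK : Convex ℝ K) (hKc : IsClosed K) {x : ι → ℝ} {t : ℝ}
    (hx : (x, t) ∉ K) :
    ∃ (v : ι → ℝ) (lam u : ℝ), v ⬝ᵥ x + lam * t < u ∧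
      ∀ y r, (y, r) ∈ K → u < v ⬝ᵥ y + lam * r := by
  classical
  obtain ⟨φ, u, hxu, hK⟩ := geometric_hahn_banach_point_closed hK hKc hx
  refine ⟨fun i => φ (Pi.single i 1, 0), φ (0, 1), u, ?_, fun y r hyr => ?_⟩
  · rwa [← φ.apply_prod_eq_dotProduct_add]
  · rw [← φ.apply_prod_eq_dotProduct_add]
    exact hK _ hyr

section ExpectationSet

variable [MeasurableSpace Ω]

theorem integral_ofReal_smul_add_ofReal_smul_measure {μ ν : Measure Ω} {g : Ω → ℝ}
    (hμ : Integrable g μ) (hν : Integrable g ν) {a b : ℝ} (ha : 0 ≤ a) (hb : 0 ≤ b) :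
    ∫ ω, g ω ∂(ENNReal.ofReal a • μ + ENNReal.ofReal b • ν) =
      a * ∫ ω, g ω ∂μ + b * ∫ ω, g ω ∂ν := by
  rw [integral_add_measure (hμ.smul_measure ENNReal.ofReal_ne_top)
    (hν.smul_measure ENNReal.ofReal_ne_top), integral_smul_measure, integral_smul_measure,
    ENNReal.toReal_ofReal ha, ENNReal.toReal_ofReal hb, smul_eq_mul, smul_eq_mul]

variable [TopologicalSpace Ω]

theorem ContinuousMap.integrable_of_compactSpace [CompactSpace Ω] [OpensMeasurableSpace Ω]
    (g : C(Ω, ℝ)) (μ : Measure Ω) [IsFiniteMeasure μ] : Integrable g μ :=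
  g.continuous.integrable_of_hasCompactSupport (HasCompactSupport.of_compactSpace _)

variable {ι : Type*} (S : ι → C(Ω, ℝ)) (H : C(Ω, ℝ))

def expectationSet : Set ((ι → ℝ) × ℝ) :=
  range fun P : ProbabilityMeasure Ω => (fun i => ∫ ω, S i ω ∂P, ∫ ω, H ω ∂P)

theorem isCompact_expectationSet [CompactSpace Ω] [T2Space Ω] [BorelSpace Ω] :
    IsCompact (expectationSet S H) :=
  isCompact_range <| (continuous_pi fun i => ProbabilityMeasure.continuous_integral_continuousMap
    (S i)).prodMk (ProbabilityMeasure.continuous_integral_continuousMap H)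

theorem convex_expectationSet [CompactSpace Ω] [OpensMeasurableSpace Ω] :
    Convex ℝ (expectationSet S H) := by
  rintro _ ⟨P, rfl⟩ _ ⟨Q, rfl⟩ a b ha hb hab
  set μ : Measure Ω := ENNReal.ofReal a • (P : Measure Ω) + ENNReal.ofReal b • (Q : Measure Ω)
  have hR : IsProbabilityMeasure μ := by
    constructor
    simp [μ, ← ENNReal.ofReal_add ha hb, hab]
  have hint : ∀ g : C(Ω, ℝ),
      ∫ ω, g ω ∂μ = a * ∫ ω, g ω ∂(P : Measure Ω) + b * ∫ ω, g ω ∂(Q : Measure Ω) := fun g =>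
    integral_ofReal_smul_add_ofReal_smul_measure (g.integrable_of_compactSpace _)
      (g.integrable_of_compactSpace _) ha hb
  refine ⟨⟨_, hR⟩, ?_⟩
  ext <;> simp [hint]

theorem mk_mem_expectationSet [OpensMeasurableSpace Ω] [T1Space Ω] (ω : Ω) :
    ((S · ω), H ω) ∈ expectationSet S H :=
  ⟨⟨Measure.dirac ω, inferInstance⟩, by simp [integral_dirac]⟩

end ExpectationSet

section Market

variable [TopologicalSpace Ω] {D : ℕ} {f : Fin (D + 1) → ℝ} {S : Fin (D + 1) → C(Ω, ℝ)}

theorem exists_isSuperhedge [CompactSpace Ω] (hS0 : ∀ ω, S 0 ω = 1) (H : C(Ω, ℝ)) :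
    ∃ π, IsSuperhedge S H π :=
  ⟨Pi.single 0 ‖H‖, fun ω => by
    change H ω ≤ Pi.single 0 ‖H‖ ⬝ᵥ (S · ω)
    rw [single_dotProduct, hS0, mul_one]
    exact (le_abs_self _).trans (H.norm_coe_le_norm ω)⟩

theorem ArbitrageFree.exists_payoff_le_price [Nonempty Ω] (hNA : ArbitrageFree f S)
    (hS0 : ∀ ω, S 0 ω = 1) (hf0 : f 0 = 1) (v : Fin (D + 1) → ℝ) :
    ∃ ω, v ⬝ᵥ (S · ω) ≤ v ⬝ᵥ f := by
  by_contra! hlt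
  obtain ⟨ω₀⟩ := ‹Nonempty Ω›
  set π := v - Pi.single 0 (v ⬝ᵥ f)
  have hpayoff : ∀ ω, 0 < π ⬝ᵥ (S · ω) := fun ω => by
    rw [sub_dotProduct, single_dotProduct, hS0, mul_one, sub_pos]
    exact hlt ω
  have hprice : π ⬝ᵥ f ≤ 0 := by
    rw [sub_dotProduct, single_dotProduct, hf0, mul_one, sub_self]
  exact hNA ⟨π, hprice, fun ω => (hpayoff ω).le, ω₀, hpayoff ω₀⟩

theorem ArbitrageFree.mem_nullPortfolios [Nonempty Ω] (hNA : ArbitrageFree f S)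
    (hS0 : ∀ ω, S 0 ω = 1) (hf0 : f 0 = 1) (v : Fin (D + 1) → ℝ)
    (hv : ∀ ω, 0 ≤ v ⬝ᵥ (S · ω)) (hvf : v ⬝ᵥ f ≤ 0) :
    v ∈ nullPortfolios f fun ω d => S d ω := by
  have hzero : ∀ ω, v ⬝ᵥ (S · ω) = 0 := fun ω =>
    (not_lt.1 fun hpos => hNA ⟨v, hvf, hv, ω, hpos⟩).antisymm (hv ω)
  obtain ⟨ω, hω⟩ := hNA.exists_payoff_le_price hS0 hf0 v
  exact ⟨hzero, hvf.antisymm (hzero ω ▸ hω)⟩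

theorem exists_isMartingaleMeasure_of_mem_expectationSet [MeasurableSpace Ω] [CompactSpace Ω]
    [OpensMeasurableSpace Ω] {H : C(Ω, ℝ)} {c : ℝ}
    (hfc : (f, c) ∈ expectationSet S H) :
    ∃ P : Measure Ω, IsMartingaleMeasure f S P ∧ ∫ ω, H ω ∂P = c := by
  obtain ⟨P, hP⟩ := hfc
  simp only [Prod.mk.injEq, funext_iff] at hP
  exact ⟨P, ⟨inferInstance, fun d => ⟨(S d).integrable_of_compactSpace _, hP.1 d⟩⟩, hP.2⟩

theorem mem_expectationSet_of_isMinOn [MeasurableSpace Ω] [Nonempty Ω] [CompactSpace Ω]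
    [T2Space Ω] [BorelSpace Ω] (hNA : ArbitrageFree f S) (hS0 : ∀ ω, S 0 ω = 1) (hf0 : f 0 = 1)
    {H : C(Ω, ℝ)} {π : Fin (D + 1) → ℝ} (hπ : IsSuperhedge S H π)
    (hmin : ∀ ρ, IsSuperhedge S H ρ → π ⬝ᵥ f ≤ ρ ⬝ᵥ f) :
    (f, π ⬝ᵥ f) ∈ expectationSet S H := by
  by_contra hnot
  obtain ⟨v, lam, u, hfu, hK⟩ := exists_dotProduct_add_mul_lt_of_notMem
    (convex_expectationSet S H) (isCompact_expectationSet S H).isClosed hnot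
  have hω : ∀ ω, u < v ⬝ᵥ (S · ω) + lam * H ω := fun ω => hK _ _ (mk_mem_expectationSet S H ω)
  rcases lt_or_ge lam 0 with hlam | hlam
  · set ρ := (-lam)⁻¹ • (v - Pi.single 0 u)
    have hρ : ∀ x : Fin (D + 1) → ℝ, x 0 = 1 → ρ ⬝ᵥ x = (v ⬝ᵥ x - u) / -lam := fun x hx => by
      rw [smul_dotProduct, sub_dotProduct, single_dotProduct, hx, mul_one, smul_eq_mul,
        inv_mul_eq_div]
    have hρS : IsSuperhedge S H ρ := fun ω => by
      change H ω ≤ ρ ⬝ᵥ (S · ω)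
      rw [hρ _ (hS0 ω), le_div_iff₀ (neg_pos.2 hlam)]
      linarith [hω ω]
    have hρf : ρ ⬝ᵥ f < π ⬝ᵥ f := by
      rw [hρ _ hf0, div_lt_iff₀ (neg_pos.2 hlam)]
      linarith
    exact (hmin ρ hρS).not_gt hρf
  · obtain ⟨ω, hω'⟩ := hNA.exists_payoff_le_price hS0 hf0 (v + lam • π)
    rw [add_dotProduct, add_dotProduct, smul_dotProduct, smul_dotProduct, smul_eq_mul,
      smul_eq_mul] at hω'
    have hπω : H ω ≤ π ⬝ᵥ (S · ω) := hπ ω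
    have := mul_le_mul_of_nonneg_left hπω hlam
    linarith [hω ω]

end Market

theorem exists_optimal_superhedge_general
    [MetricSpace Ω] [Nonempty Ω] [CompactSpace Ω]
    [MeasurableSpace Ω] [BorelSpace Ω] {D : ℕ} (f : Fin (D + 1) → ℝ) (S : Fin (D + 1) → C(Ω, ℝ))
    (hS0 : ∀ ω, S 0 ω = 1) (hf0 : f 0 = 1)
    (hNA : ArbitrageFree f S) (H : C(Ω, ℝ)) :
    ∃ πstar : Fin (D + 1) → ℝ, IsSuperhedge S H πstar ∧
      (∀ π : Fin (D + 1) → ℝ, IsSuperhedge S H π →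
        (∑ d, πstar d * f d) ≤ ∑ d, π d * f d) ∧
      ∃ Pstar : Measure Ω, IsMartingaleMeasure f S Pstar ∧
        (∑ d, πstar d * f d) = ∫ ω, H ω ∂Pstar := by
  obtain ⟨πstar, hπstar, hmin⟩ :=
    exists_isMinOn_superhedges (hNA.mem_nullPortfolios hS0 hf0) (exists_isSuperhedge hS0 H)
  obtain ⟨Pstar, hPstar, hH⟩ := exists_isMartingaleMeasure_of_mem_expectationSet
    (mem_expectationSet_of_isMinOn hNA hS0 hf0 hπstar fun π hπ => hmin hπ)
  exact ⟨πstar, hπstar, fun π hπ => hmin hπ, Pstar, hPstar, hH.symm⟩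

/-- existence of a cheapest superhedge, whose cost equals the expectation of
the claim under some martingale measure. -/
theorem exists_optimal_superhedge
    [MetricSpace Ω] [Nonempty Ω] [CompactSpace Ω] [TopologicalSpace.SeparableSpace Ω]
    [CompleteSpace Ω] [MeasurableSpace Ω] [BorelSpace Ω] {D : ℕ} (f : Fin (D + 1) → ℝ) (S : Fin (D + 1) → C(Ω, ℝ))
    (hf : ∀ d, 0 ≤ f d) (hS : ∀ d ω, 0 ≤ S d ω)
    (hS0 : ∀ ω, S 0 ω = 1) (hf0 : f 0 = 1)
    (hNA : ArbitrageFree f S) (H : C(Ω, ℝ)) (hH : ∀ ω, 0 ≤ H ω) :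
    ∃ πstar : Fin (D + 1) → ℝ, IsSuperhedge S H πstar ∧
      (∀ π : Fin (D + 1) → ℝ, IsSuperhedge S H π →
        (∑ d, πstar d * f d) ≤ ∑ d, π d * f d) ∧
      ∃ Pstar : Measure Ω, IsMartingaleMeasure f S Pstar ∧
        (∑ d, πstar d * f d) = ∫ ω, H ω ∂Pstar :=
  exists_optimal_superhedge_general f S hS0 hf0 hNA H
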